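/- arXiv:1603.08209 — 10 statements merged into one kernel-verified Lean document; each statement's English description precedes it below -/
import Mathlib

section
/- For every real number p with |p| < 1 and every real number x, the series ∑_{k=1}^∞ p^k · sin(kx)/k converges and arctan( p·sin x / (1 − p·cos x) ) = ∑_{k=1}^∞ p^k · sin(kx)/k, where arctan denotes the principal branch of the inverse tangent. -/
/-! Put `z = p e^{ix}`, so `‖z‖ = |p| < 1`. Taking imaginary parts in the Taylor series
`-log (1 - z) = ∑ z^(k+1)/(k+1)` gives `∑ p^(k+1) sin((k+1)x)/(k+1)` on the right and
`-arg (1 - z)` on the left. Since `Re (1 - z) = 1 - p cos x > 0`, the argument of `1 - z` is the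
principal arctangent of `Im (1 - z) / Re (1 - z) = -p sin x / (1 - p cos x)`. -/

open Complex

lemma Complex.arg_eq_arctan_of_re_pos {w : ℂ} (h : 0 < w.re) :
    arg w = Real.arctan (w.im / w.re) := by
  rw [← tan_arg, Real.arctan_tan (neg_pi_div_two_lt_arg_iff.mpr (Or.inl h))
    (arg_lt_pi_div_two_iff.mpr (Or.inl h))]

lemma Complex.im_ofReal_mul_exp_pow_div (p x : ℝ) (n : ℕ) :
    ((p * exp (x * I)) ^ n / n).im = p ^ n * Real.sin (n * x) / n := by
  rw [mul_pow, ← exp_nat_mul, ← mul_assoc, ← ofReal_natCast, ← ofReal_mul, ← ofReal_pow,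
    div_ofReal_im, im_ofReal_mul, exp_ofReal_mul_I_im]

lemma Complex.re_one_sub_ofReal_mul_exp (p x : ℝ) :
    (1 - p * exp (x * I)).re = 1 - p * Real.cos x := by
  simp [exp_ofReal_mul_I_re]

lemma Complex.im_one_sub_ofReal_mul_exp (p x : ℝ) :
    (1 - p * exp (x * I)).im = -(p * Real.sin x) := by
  simp [exp_ofReal_mul_I_im]

lemma Real.one_sub_mul_cos_pos {p : ℝ} (hp : |p| < 1) (x : ℝ) : 0 < 1 - p * Real.cos x := by
  have : |p * Real.cos x| < 1 := by
    rw [abs_mul]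
    exact lt_of_le_of_lt (mul_le_of_le_one_right (abs_nonneg p) (abs_cos_le_one x)) hp
  linarith [le_abs_self (p * Real.cos x)]

/-- The arctangent generator identity: for `|p| < 1` and any real `x`, the series
`∑_{k=1}^∞ p^k sin(kx)/k` converges, with sum `arctan(p sin x / (1 - p cos x))`. -/
theorem stmt_0 (p x : ℝ) (hp : |p| < 1) :
    HasSum (fun k : ℕ => p ^ (k + 1) * Real.sin ((k + 1 : ℝ) * x) / (k + 1))
      (Real.arctan (p * Real.sin x / (1 - p * Real.cos x))) := by
  have hz : ‖(p : ℂ) * exp (x * I)‖ < 1 := by simpa [norm_exp_ofReal_mul_I] using hp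
  have hre_pos : 0 < (1 - p * exp (x * I)).re := by
    rw [re_one_sub_ofReal_mul_exp]
    exact Real.one_sub_mul_cos_pos hp x
  convert hasSum_im (hasSum_taylorSeries_neg_log' hz) using 1
  · funext k
    exact_mod_cast (im_ofReal_mul_exp_pow_div p x (k + 1)).symm
  · rw [neg_im, log_im, arg_eq_arctan_of_re_pos hre_pos, re_one_sub_ofReal_mul_exp,
      im_one_sub_ofReal_mul_exp, neg_div, Real.arctan_neg, neg_neg]
end

section
/- For every real number p with |p| < 1 and every real number x, the series ∑_{k=1}^∞ p^k · cos(kx)/k converges and −(1/2)·ln(1 − 2p·cos x + p²) = ∑_{k=1}^∞ p^k · cos(kx)/k. -/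
/-! Take real parts in `-log (1 - z) = ∑ zᵏ/k` at `z = p e^{ix}`: the real part of `zᵏ` is
`pᵏ cos (kx)`, and the real part of `-log (1 - z)` is `-log ‖1 - z‖ = -(1/2) log ‖1 - z‖²`
with `‖1 - z‖² = 1 - 2p cos x + p²`. -/

namespace Complex

lemma re_ofReal_mul_exp_mul_I_pow_div (r θ c : ℝ) (n : ℕ) :
    ((r * exp (θ * I)) ^ n / c).re = r ^ n * Real.cos (n * θ) / c := by
  rw [mul_pow, ← exp_nat_mul, ← mul_assoc, div_ofReal_re, ← ofReal_pow, ← ofReal_natCast,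
    ← ofReal_mul, re_ofReal_mul, exp_ofReal_mul_I_re]

lemma normSq_one_sub_ofReal_mul_exp_mul_I (r θ : ℝ) :
    normSq (1 - r * exp (θ * I)) = 1 - 2 * r * Real.cos θ + r ^ 2 := by
  rw [normSq_apply]
  simp only [sub_re, sub_im, one_re, one_im, re_ofReal_mul, im_ofReal_mul,
    exp_ofReal_mul_I_re, exp_ofReal_mul_I_im]
  linear_combination r ^ 2 * Real.sin_sq_add_cos_sq θ

lemma neg_log_re (w : ℂ) : (-log w).re = -(1 / 2) * Real.log (normSq w) := by
  rw [neg_re, log_re, ← Complex.sq_norm, Real.log_pow]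
  ring

end Complex

/-- The logarithm generator identity: for `|p| < 1` and any real `x`, the series
`∑_{k=1}^∞ p^k cos(kx)/k` converges, with sum `-(1/2) ln(1 - 2p cos x + p^2)`. -/
theorem stmt_1 (p x : ℝ) (hp : |p| < 1) :
    HasSum (fun k : ℕ => p ^ (k + 1) * Real.cos ((k + 1 : ℝ) * x) / (k + 1))
      (-(1 / 2) * Real.log (1 - 2 * p * Real.cos x + p ^ 2)) := by
  set z : ℂ := p * Complex.exp (x * Complex.I)
  have hz : ‖z‖ < 1 := by simpa [z, Complex.norm_exp_ofReal_mul_I] using hp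
  have hre := Complex.hasSum_re (Complex.hasSum_taylorSeries_neg_log' hz)
  rw [Complex.neg_log_re, Complex.normSq_one_sub_ofReal_mul_exp_mul_I] at hre
  convert hre using 2 with k
  exact_mod_cast (Complex.re_ofReal_mul_exp_mul_I_pow_div p x (k + 1) (k + 1)).symm
end

section
/- For every positive integer n, √n · arctan(1/√n) = (1/n) · ∑_{k=0}^∞ (1/(n²)^k) · ( n/(4k+1) − 1/(4k+3) ). -/
/-!
Put `y = 1 / √n`, so that `|y| ≤ 1`. The Maclaurin series of `arctan y` converges (for `n = 1`
this is Leibniz's series), and multiplying it by `√n` gives `∑ (-1)^i / ((2i+1) nⁱ)`. Grouping the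
terms `2k` and `2k+1` yields `(1/n) (1/n²)ᵏ (n/(4k+1) - 1/(4k+3))`; these grouped terms are
nonnegative, so the convergence of the partial sums upgrades to unconditional summation.
-/

open Filter Finset Topology

theorem Finset.sum_range_two_mul {M : Type*} [AddCommMonoid M] (f : ℕ → M) (K : ℕ) :
    ∑ i ∈ range (2 * K), f i = ∑ k ∈ range K, (f (2 * k) + f (2 * k + 1)) := by
  induction K with
  | zero => simp
  | succ K ih => rw [mul_add_one, sum_range_succ, sum_range_succ, sum_range_succ, ih, add_assoc]

theorem Filter.Tendsto.sum_range_pairs {M : Type*} [AddCommMonoid M] [TopologicalSpace M]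
    {f : ℕ → M} {L : M} (h : Tendsto (fun N => ∑ i ∈ range N, f i) atTop (𝓝 L)) :
    Tendsto (fun K => ∑ k ∈ range K, (f (2 * k) + f (2 * k + 1))) atTop (𝓝 L) := by
  simpa only [Function.comp_def, id, sum_range_two_mul] using
    h.comp (tendsto_id.const_mul_atTop' two_pos)

theorem Real.tendsto_sum_range_arctan {y : ℝ} (hy : |y| ≤ 1) :
    Tendsto (fun N => ∑ i ∈ range N, (-1) ^ i * y ^ (2 * i + 1) / ↑(2 * i + 1)) atTop
      (𝓝 (arctan y)) := by
  rcases hy.lt_or_eq with hlt | heq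
  · exact (hasSum_arctan hlt).tendsto_sum_nat
  have leibniz := tendsto_sum_pi_div_four
  rcases abs_eq_abs.mp (heq.trans abs_one.symm) with rfl | rfl
  · simpa [arctan_one] using leibniz
  · simpa [pow_succ, pow_mul, arctan_neg, arctan_one, neg_div] using leibniz.neg

theorem Real.hasSum_sqrt_mul_arctan_one_div_sqrt {x : ℝ} (hx : 1 ≤ x) :
    HasSum (fun k : ℕ => 1 / x * (1 / (x ^ 2) ^ k * (x / (4 * k + 1) - 1 / (4 * k + 3))))
      (√x * arctan (1 / √x)) := by
  have hx0 : 0 < x := by linarith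
  have hy : |1 / √x| ≤ 1 := by
    rw [abs_of_nonneg (by positivity), div_le_one (by positivity)]
    exact one_le_sqrt.mpr hx
  have hterm_nonneg (k : ℕ) :
      0 ≤ 1 / x * (1 / (x ^ 2) ^ k * (x / (4 * k + 1) - 1 / (4 * k + 3))) := by
    have : 1 / (4 * k + 3 : ℝ) ≤ x / (4 * k + 1) := by gcongr; linarith
    have : 0 ≤ x / (4 * k + 1) - 1 / (4 * k + 3 : ℝ) := by linarith
    positivity
  rw [hasSum_iff_tendsto_nat_of_nonneg hterm_nonneg]
  have hlim := (tendsto_sum_range_arctan hy).const_mul √x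
  simp only [mul_sum] at hlim
  convert hlim.sum_range_pairs using 3 with K k
  have hs : √x ^ 2 = x := sq_sqrt hx0.le
  have hs0 : √x ≠ 0 := by positivity
  have hodd_pow (m : ℕ) : (1 / √x) ^ (2 * m + 1) = (1 / x) ^ m / √x := by
    rw [pow_succ, pow_mul, div_pow, hs]; field_simp
  have heven_pow : (1 / x) ^ (2 * k) = 1 / (x ^ 2) ^ k := by
    rw [pow_mul, one_div_pow, one_div_pow]
  rw [hodd_pow, hodd_pow, (even_two_mul k).neg_one_pow, (odd_two_mul_add_one k).neg_one_pow,
    pow_succ (1 / x), heven_pow]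
  push_cast
  field_simp
  ring

theorem stmt_2 (n : ℕ) (hn : 0 < n) :
    Real.sqrt n * Real.arctan (1 / Real.sqrt n) =
      (1 / (n : ℝ)) * ∑' k : ℕ, (1 / ((n : ℝ) ^ 2) ^ k) *
        ((n : ℝ) / (4 * (k : ℝ) + 1) - 1 / (4 * (k : ℝ) + 3)) := by
  have hn1 : (1 : ℝ) ≤ n := by exact_mod_cast hn
  rw [← tsum_mul_left, (Real.hasSum_sqrt_mul_arctan_one_div_sqrt hn1).tsum_eq]
end

section
/- For every positive integer n, n² · √3 · arctan( √3/(2n + 1) ) = (3/2) · ∑_{k=0}^∞ (1/(n³)^k) · ( n/(3k+1) − 1/(3k+2) ). -/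
/-!
On `[0, 1)` the geometric series gives
`1 / (1 + x + x²) = (1 - x) / (1 - x³) = ∑ₖ x³ᵏ (1 - x)`. Integrating termwise over `[0, r]`
(legitimate up to `r = 1`, since the integrands are nonnegative with integrals bounded by
`1 / (k + 1)²`) expresses `∫₀ʳ dx / (1 + x + x²)` as the series
`∑ₖ (r³ᵏ⁺¹ / (3k + 1) - r³ᵏ⁺² / (3k + 2))`, while the antiderivative
`(2 / √3) arctan (√3 y / (2 + y))` evaluates it in closed form. Taking `r = 1 / n` and clearing
the powers of `n` gives the identity.
-/

open Real MeasureTheory Set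

lemma one_add_add_sq_pos (x : ℝ) : 0 < 1 + x + x ^ 2 := by
  nlinarith [sq_nonneg (x + 1 / 2)]

lemma pow_mul_one_sub_nonneg {x : ℝ} (h0 : 0 ≤ x) (h1 : x ≤ 1) (m : ℕ) :
    0 ≤ x ^ m * (1 - x) :=
  mul_nonneg (pow_nonneg h0 m) (sub_nonneg.mpr h1)

lemma hasDerivAt_arctan_sqrt_three_mul_div {x : ℝ} (hx : x ≠ -2) :
    HasDerivAt (fun y => 2 / √3 * arctan (√3 * y / (2 + y))) (1 + x + x ^ 2)⁻¹ x := by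
  have h2x : 2 + x ≠ 0 := fun h => hx (by linarith)
  have hquot : HasDerivAt (fun y => √3 * y / (2 + y)) (2 * √3 / (2 + x) ^ 2) x :=
    (((hasDerivAt_id x).const_mul √3).div ((hasDerivAt_id x).const_add 2) h2x).congr_deriv
      (by simp; ring)
  refine (((hasDerivAt_arctan _).comp x hquot).const_mul (2 / √3)).congr_deriv ?_
  have hsq : √3 ^ 2 = 3 := sq_sqrt (by norm_num)
  have hpos := one_add_add_sq_pos x
  field_simp
  linear_combination (-x ^ 2) * hsq

lemma integral_inv_one_add_add_sq {r : ℝ} (hr : -2 < r) :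
    ∫ x in (0 : ℝ)..r, (1 + x + x ^ 2)⁻¹ = 2 / √3 * arctan (√3 * r / (2 + r)) := by
  have hcont : Continuous fun x : ℝ => (1 + x + x ^ 2)⁻¹ :=
    (by fun_prop : Continuous fun x : ℝ => 1 + x + x ^ 2).inv₀ fun x => (one_add_add_sq_pos x).ne'
  have hderiv : ∀ x ∈ uIcc 0 r, HasDerivAt (fun y => 2 / √3 * arctan (√3 * y / (2 + y)))
      (1 + x + x ^ 2)⁻¹ x := fun x hx =>
    hasDerivAt_arctan_sqrt_three_mul_div ((lt_min (by norm_num) hr).trans_le hx.1).ne'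
  have := intervalIntegral.integral_eq_sub_of_hasDerivAt hderiv (hcont.intervalIntegrable 0 r)
  simpa using this

lemma integral_pow_mul_one_sub (m : ℕ) (r : ℝ) :
    ∫ x in (0 : ℝ)..r, x ^ m * (1 - x) = r ^ (m + 1) / (m + 1) - r ^ (m + 2) / (m + 2) := by
  simp_rw [mul_one_sub, ← pow_succ]
  rw [intervalIntegral.integral_sub (intervalIntegral.intervalIntegrable_pow _)
    (intervalIntegral.intervalIntegrable_pow _), integral_pow, integral_pow]
  push_cast
  ring

lemma hasSum_pow_three_mul_mul_one_sub {x : ℝ} (h0 : 0 ≤ x) (h1 : x < 1) :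
    HasSum (fun k : ℕ => x ^ (3 * k) * (1 - x)) (1 + x + x ^ 2)⁻¹ := by
  have hcube : x ^ 3 < 1 := pow_lt_one₀ h0 h1 three_ne_zero
  have hq := (one_add_add_sq_pos x).ne'
  have h3 : 1 - x ^ 3 ≠ 0 := (sub_pos.mpr hcube).ne'
  rw [show (1 + x + x ^ 2)⁻¹ = (1 - x ^ 3)⁻¹ * (1 - x) by field_simp; ring]
  simpa only [pow_mul] using (hasSum_geometric_of_lt_one (pow_nonneg h0 3) hcube).mul_right (1 - x)

lemma summable_integral_pow_three_mul_mul_one_sub {r : ℝ} (hr0 : 0 ≤ r) (hr1 : r ≤ 1) :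
    Summable fun k : ℕ => ∫ x in (0 : ℝ)..r, x ^ (3 * k) * (1 - x) := by
  have hbound : Summable fun k : ℕ => 1 / ((k : ℝ) + 1) ^ 2 := by
    simpa using (summable_nat_add_iff 1).mpr (Real.summable_one_div_nat_pow.mpr one_lt_two)
  refine hbound.of_nonneg_of_le (fun k => ?_) (fun k => ?_)
  · exact intervalIntegral.integral_nonneg hr0 fun x hx =>
      pow_mul_one_sub_nonneg hx.1 (hx.2.trans hr1) _
  · calc ∫ x in (0 : ℝ)..r, x ^ (3 * k) * (1 - x)
        ≤ ∫ x in (0 : ℝ)..1, x ^ (3 * k) * (1 - x) := by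
          refine intervalIntegral.integral_mono_interval le_rfl hr0 hr1 ?_
            (Continuous.intervalIntegrable (by fun_prop) _ _)
          filter_upwards [ae_restrict_mem measurableSet_Ioc] with x hx
          exact pow_mul_one_sub_nonneg hx.1.le hx.2 _
      _ = 1 / ((3 * k + 1) * (3 * k + 2)) := by
          rw [integral_pow_mul_one_sub]
          push_cast
          field_simp
          ring
      _ ≤ 1 / ((k : ℝ) + 1) ^ 2 := by
          gcongr
          nlinarith

lemma hasSum_integral_pow_three_mul_mul_one_sub {r : ℝ} (hr0 : 0 ≤ r) (hr1 : r ≤ 1) :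
    HasSum (fun k : ℕ => ∫ x in (0 : ℝ)..r, x ^ (3 * k) * (1 - x))
      (∫ x in (0 : ℝ)..r, (1 + x + x ^ 2)⁻¹) := by
  simp only [intervalIntegral.integral_of_le hr0, integral_Ioc_eq_integral_Ioo]
  have hnorm : ∀ k : ℕ, ∫ x in Ioo 0 r, ‖x ^ (3 * k) * (1 - x)‖ =
      ∫ x in Ioo 0 r, x ^ (3 * k) * (1 - x) := fun k =>
    setIntegral_congr_fun measurableSet_Ioo fun x hx =>
      norm_of_nonneg (pow_mul_one_sub_nonneg hx.1.le (hx.2.le.trans hr1) _)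
  have hsum := summable_integral_pow_three_mul_mul_one_sub hr0 hr1
  simp only [intervalIntegral.integral_of_le hr0, integral_Ioc_eq_integral_Ioo, ← hnorm] at hsum
  have := hasSum_integral_of_summable_integral_norm
    (fun k => (Continuous.integrableOn_Icc (by fun_prop)).mono_set Ioo_subset_Icc_self) hsum
  rwa [setIntegral_congr_fun measurableSet_Ioo fun x hx =>
    (hasSum_pow_three_mul_mul_one_sub hx.1.le (hx.2.trans_le hr1)).tsum_eq] at this

lemma hasSum_arctan_sqrt_three_mul_div {r : ℝ} (hr0 : 0 ≤ r) (hr1 : r ≤ 1) :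
    HasSum (fun k : ℕ => r ^ (3 * k + 1) / (3 * k + 1) - r ^ (3 * k + 2) / (3 * k + 2))
      (2 / √3 * arctan (√3 * r / (2 + r))) := by
  have := hasSum_integral_pow_three_mul_mul_one_sub hr0 hr1
  simp only [integral_pow_mul_one_sub, integral_inv_one_add_add_sq (by linarith : -2 < r)]
    at this
  exact_mod_cast this

theorem stmt_6 (n : ℕ) (hn : 0 < n) :
    (n : ℝ) ^ 2 * Real.sqrt 3 * Real.arctan (Real.sqrt 3 / (2 * (n : ℝ) + 1)) =
      (3 / 2) * ∑' k : ℕ, (1 / ((n : ℝ) ^ 3) ^ k) *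
        ((n : ℝ) / (3 * (k : ℝ) + 1) - 1 / (3 * (k : ℝ) + 2)) := by
  have hn' : (1 : ℝ) ≤ n := by exact_mod_cast hn
  have hsum := (hasSum_arctan_sqrt_three_mul_div (by positivity)
    (inv_le_one_of_one_le₀ hn')).mul_left ((n : ℝ) ^ 2)
  have hterm : ∀ k : ℕ, (n : ℝ) ^ 2 * ((n : ℝ)⁻¹ ^ (3 * k + 1) / (3 * k + 1) -
      (n : ℝ)⁻¹ ^ (3 * k + 2) / (3 * k + 2)) =
      1 / ((n : ℝ) ^ 3) ^ k * ((n : ℝ) / (3 * k + 1) - 1 / (3 * k + 2)) := by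
    intro k
    have : (n : ℝ) ≠ 0 := by positivity
    rw [inv_pow, inv_pow, pow_add, pow_add, ← pow_mul]
    field_simp
  have harg : √3 * (n : ℝ)⁻¹ / (2 + (n : ℝ)⁻¹) = √3 / (2 * n + 1) := by
    field_simp
  simp only [hterm, harg] at hsum
  rw [hsum.tsum_eq]
  field_simp
  exact sq_sqrt (by norm_num)
end

section
/- For every positive integer n, n⁷ · arctan( 1/(2n − 1) ) = (1/16) · ∑_{k=0}^∞ (1/(16n⁸)^k) · ( 8n⁶/(8k+1) + 8n⁵/(8k+2) + 4n⁴/(8k+3) − 2n²/(8k+5) − 2n/(8k+6) − 1/(8k+7) ). -/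
/-!
Put `z = (1 + i) / (2n)`. The logarithm series `-log (1 - z) = ∑ z^k / k` has imaginary part
`-arg (1 - z) = arctan (1 / (2n - 1))`. Since `z^8 = 1 / (16 n^8)` is real, grouping the series in
blocks of eight terms gives a BBP-type series in base `16 n^8`, whose coefficients are
`16 n^7 Im (z^j)` for `j < 8`, namely `0, 8n^6, 8n^5, 4n^4, 0, -2n^2, -2n, -1`.
-/

open Complex

theorem HasSum.sum_fin_blocks {α : Type*} [AddCommMonoid α] [TopologicalSpace α] [ContinuousAdd α]
    [RegularSpace α] {f : ℕ → α} {a : α} (m : ℕ) [NeZero m] (hf : HasSum f a) :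
    HasSum (fun k ↦ ∑ j : Fin m, f (k * m + j)) a :=
  ((Nat.divModEquiv m).symm.hasSum_iff.mpr hf).prod_fiberwise fun _ ↦ hasSum_fintype _

namespace Complex

theorem arg_eq_arctan {w : ℂ} (hw : 0 < w.re) : arg w = Real.arctan (w.im / w.re) := by
  obtain ⟨hlo, hhi⟩ := abs_lt.mp (abs_arg_lt_pi_div_two_iff.mpr (Or.inl hw))
  rw [← tan_arg, Real.arctan_tan hlo hhi]

/-- The arctangent generator: for `w = p e^{ix}` this reads
`∑ p^k sin (kx) / k = arctan (p sin x / (1 - p cos x))`. -/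
theorem hasSum_im_pow_div {w : ℂ} (hw : ‖w‖ < 1) :
    HasSum (fun k : ℕ ↦ (w ^ k).im / k) (Real.arctan (w.im / (1 - w.re))) := by
  have hre : 0 < (1 - w).re := by
    rw [sub_re, one_re, sub_pos]
    exact (re_le_norm w).trans_lt hw
  convert (hasSum_taylorSeries_neg_log hw).mapL imCLM using 1
  · simp
  · rw [imCLM_apply, neg_im, log_im, arg_eq_arctan hre, ← Real.arctan_neg]
    simp [neg_div]

theorem im_pow_mul_add {z : ℂ} {m : ℕ} {c : ℝ} (hz : z ^ m = c) (k j : ℕ) :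
    (z ^ (k * m + j)).im = c ^ k * (z ^ j).im := by
  rw [pow_add, mul_comm k, pow_mul, hz, ← ofReal_pow, im_ofReal_mul]

theorem norm_ofReal_mul_one_add_I (r : ℝ) : ‖(r : ℂ) * (1 + I)‖ = |r| * √2 := by
  rw [norm_mul, norm_real, Real.norm_eq_abs, norm_def, normSq_apply]
  norm_num

theorem ofReal_mul_one_add_I_pow_eight (r : ℝ) : ((r : ℂ) * (1 + I)) ^ 8 = ((16 * r ^ 8 : ℝ) : ℂ) := by
  have h2 : (1 + I) ^ 2 = 2 * I := by
    ring_nf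
    rw [I_sq]
    ring
  rw [mul_pow, show (1 + I) ^ 8 = ((1 + I) ^ 2) ^ 4 by ring, h2, mul_pow, I_pow_four]
  push_cast
  ring

end Complex

theorem stmt_7 (n : ℕ) (hn : 0 < n) :
    (n : ℝ) ^ 7 * Real.arctan (1 / (2 * (n : ℝ) - 1)) =
      (1 / 16) * ∑' k : ℕ, (1 / (16 * (n : ℝ) ^ 8) ^ k) *
        (8 * (n : ℝ) ^ 6 / (8 * (k : ℝ) + 1) + 8 * (n : ℝ) ^ 5 / (8 * (k : ℝ) + 2)
          + 4 * (n : ℝ) ^ 4 / (8 * (k : ℝ) + 3) - 2 * (n : ℝ) ^ 2 / (8 * (k : ℝ) + 5)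
          - 2 * (n : ℝ) / (8 * (k : ℝ) + 6) - 1 / (8 * (k : ℝ) + 7)) := by
  have hn1 : (1 : ℝ) ≤ n := by exact_mod_cast hn
  set r : ℝ := 1 / (2 * n) with hr
  set z : ℂ := r * (1 + I) with hz
  have hz_norm : ‖z‖ < 1 := by
    have : |r| ≤ 1 / 2 := by
      rw [abs_of_pos (by positivity), hr]
      gcongr
      linarith
    rw [norm_ofReal_mul_one_add_I]
    nlinarith [Real.sq_sqrt (show (0 : ℝ) ≤ 2 by norm_num), Real.sqrt_nonneg 2]
  have hz_arctan : z.im / (1 - z.re) = 1 / (2 * n - 1) := by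
    simp only [hz, hr, re_ofReal_mul, im_ofReal_mul, add_re, add_im, one_re, one_im, I_re, I_im]
    field_simp
    ring
  have hz8 : z ^ 8 = ((1 / (16 * n ^ 8) : ℝ) : ℂ) := by
    rw [ofReal_mul_one_add_I_pow_eight, hr]
    congr 1
    field_simp
    norm_num
  have hsum := ((hasSum_im_pow_div hz_norm).sum_fin_blocks 8).mul_left (16 * (n : ℝ) ^ 7)
  have hblock : ∀ k : ℕ, 16 * (n : ℝ) ^ 7 * ∑ j : Fin 8, (z ^ (k * 8 + j)).im / (k * 8 + j : ℕ) =
      (1 / (16 * (n : ℝ) ^ 8) ^ k) *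
        (8 * (n : ℝ) ^ 6 / (8 * (k : ℝ) + 1) + 8 * (n : ℝ) ^ 5 / (8 * (k : ℝ) + 2)
          + 4 * (n : ℝ) ^ 4 / (8 * (k : ℝ) + 3) - 2 * (n : ℝ) ^ 2 / (8 * (k : ℝ) + 5)
          - 2 * (n : ℝ) / (8 * (k : ℝ) + 6) - 1 / (8 * (k : ℝ) + 7)) := by
    intro k
    simp only [Fin.sum_univ_eight, im_pow_mul_add hz8, ← one_div_pow]
    generalize (1 / (16 * (n : ℝ) ^ 8)) ^ k = c
    norm_num [pow_succ, hz, hr]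
    field_simp
    ring
  rw [hz_arctan, funext hblock] at hsum
  rw [hsum.tsum_eq]
  ring
end

section
/- For every positive integer n, n⁷ · arctan( 1/(2n + 1) ) = (1/16) · ∑_{k=0}^∞ (1/(16n⁸)^k) · ( 8n⁶/(8k+1) − 8n⁵/(8k+2) + 4n⁴/(8k+3) − 2n²/(8k+5) + 2n/(8k+6) − 1/(8k+7) ). -/
/-!
Taking imaginary parts in `-log (1 - z) = ∑ z^k / k` (`‖z‖ < 1`) gives
`∑ Im (z^k) / k = arctan (Im z / (1 - Re z))`, since `1 - z` lies in the right half-plane.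
If moreover `z^l = r` is real, grouping the terms by `k mod l` turns this into a series in
powers of `r` with `l` rational coefficients per block. For `z = c (1 + i)` (the arctangent
generator at `x = π/4`) one has `z^8 = 16 c^8`, and `c = -1/(2n)` yields the formula.
-/

open Complex

theorem HasSum.sum_range_mul_add {M : Type*} [AddCommMonoid M] [TopologicalSpace M]
    [ContinuousAdd M] [RegularSpace M] {f : ℕ → M} {a : M} (hf : HasSum f a) (l : ℕ) [NeZero l] :
    HasSum (fun k ↦ ∑ j ∈ Finset.range l, f (l * k + j)) a := by
  refine ((Nat.divModEquiv l).symm.hasSum_iff.mpr hf).prod_fiberwise fun k ↦ ?_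
  simpa [Nat.divModEquiv_symm_apply, mul_comm, Fin.sum_univ_eq_sum_range (fun j ↦ f (l * k + j))]
    using hasSum_fintype (fun j : Fin l ↦ f (l * k + j))

theorem Complex.arg_eq_arctan_s8 {w : ℂ} (hw : 0 < w.re) : w.arg = Real.arctan (w.im / w.re) := by
  obtain ⟨hlo, hhi⟩ := abs_lt.mp (abs_arg_lt_pi_div_two_iff.mpr (Or.inl hw))
  exact (Real.arctan_eq_of_tan_eq (tan_arg w) ⟨hlo, hhi⟩).symm

theorem Complex.hasSum_im_pow_div_s8 {z : ℂ} (hz : ‖z‖ < 1) :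
    HasSum (fun k : ℕ ↦ (z ^ k).im / k) (Real.arctan (z.im / (1 - z.re))) := by
  have hre : 0 < (1 - z).re := by
    rw [sub_re, one_re, sub_pos]
    exact (re_le_norm z).trans_lt hz
  have h := hasSum_im (hasSum_taylorSeries_neg_log hz)
  rw [neg_im, log_im, arg_eq_arctan_s8 hre, ← Real.arctan_neg] at h
  simpa [div_natCast_im, neg_div] using h

theorem Complex.hasSum_bbp_of_pow_eq_ofReal {z : ℂ} (hz : ‖z‖ < 1) (l : ℕ) [NeZero l] {r : ℝ}
    (hzl : z ^ l = r) :
    HasSum (fun k : ℕ ↦ r ^ k * ∑ j ∈ Finset.range l, (z ^ j).im / (l * k + j))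
      (Real.arctan (z.im / (1 - z.re))) := by
  refine ((hasSum_im_pow_div_s8 hz).sum_range_mul_add l).congr_fun fun k ↦ ?_
  rw [Finset.mul_sum]
  refine Finset.sum_congr rfl fun j _ ↦ ?_
  rw [pow_add, pow_mul, hzl, ← ofReal_pow, im_ofReal_mul]
  push_cast
  ring

theorem Real.hasSum_bbp_arctan_div_one_sub {c : ℝ} (hc : 2 * c ^ 2 < 1) :
    HasSum (fun k : ℕ ↦ (16 * c ^ 8) ^ k *
        ∑ j ∈ Finset.range 8, c ^ j * ((1 + I) ^ j).im / (8 * k + j))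
      (Real.arctan (c / (1 - c))) := by
  have hnorm : ‖(c : ℂ) * (1 + I)‖ < 1 := by
    rw [← sq_lt_one_iff₀ (norm_nonneg _), Complex.sq_norm, normSq_apply]
    simpa [two_mul, sq] using hc
  have hpow : ((c : ℂ) * (1 + I)) ^ 8 = ((16 * c ^ 8 : ℝ) : ℂ) := by
    have hsq : (1 + I) ^ 2 = 2 * I := by rw [add_sq, I_sq]; ring
    rw [mul_pow, show (1 + I) ^ 8 = ((1 + I) ^ 2) ^ 4 by ring, hsq, mul_pow, I_pow_four]
    push_cast
    ring
  convert hasSum_bbp_of_pow_eq_ofReal hnorm 8 hpow using 3 with k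
  · refine Finset.sum_congr rfl fun j _ ↦ ?_
    rw [mul_pow, ← ofReal_pow, im_ofReal_mul, Nat.cast_ofNat]
  all_goals simp

theorem stmt_8 (n : ℕ) (hn : 0 < n) :
    (n : ℝ) ^ 7 * Real.arctan (1 / (2 * (n : ℝ) + 1)) =
      (1 / 16) * ∑' k : ℕ, (1 / (16 * (n : ℝ) ^ 8) ^ k) *
        (8 * (n : ℝ) ^ 6 / (8 * (k : ℝ) + 1) - 8 * (n : ℝ) ^ 5 / (8 * (k : ℝ) + 2)
          + 4 * (n : ℝ) ^ 4 / (8 * (k : ℝ) + 3) - 2 * (n : ℝ) ^ 2 / (8 * (k : ℝ) + 5)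
          + 2 * (n : ℝ) / (8 * (k : ℝ) + 6) - 1 / (8 * (k : ℝ) + 7)) := by
  have hn1 : (1 : ℝ) ≤ n := by exact_mod_cast hn
  have hc : 2 * (-1 / (2 * n : ℝ)) ^ 2 < 1 := by
    rw [div_pow, neg_one_sq, mul_one_div, div_lt_one (by positivity)]
    nlinarith
  have harg : (-1 / (2 * n : ℝ)) / (1 - -1 / (2 * n)) = -(1 / (2 * n + 1)) := by
    rw [one_sub_div (by positivity), sub_neg_eq_add, div_div_div_cancel_right₀ (by positivity),
      neg_div, add_comm]
  have hratio : 16 * (-1 / (2 * n : ℝ)) ^ 8 = 1 / (16 * n ^ 8) := by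
    field_simp
    ring
  have h := (Real.hasSum_bbp_arctan_div_one_sub hc).mul_left (-16 * (n : ℝ) ^ 7)
  rw [harg, Real.arctan_neg, hratio] at h
  rw [show (n : ℝ) ^ 7 * Real.arctan (1 / (2 * n + 1)) =
    1 / 16 * (-16 * n ^ 7 * -Real.arctan (1 / (2 * n + 1))) by ring, ← h.tsum_eq]
  congr 1
  refine tsum_congr fun k ↦ ?_
  rw [mul_left_comm, ← one_div_pow]
  congr 1
  simp only [Finset.sum_range_succ, Finset.sum_range_zero]
  -- `((1 + I) ^ j).im = 0, 1, 2, 2, 0, -4, -8, -8` for `j = 0, …, 7`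
  norm_num [pow_succ]
  field_simp
  ring
end

section
/- For every integer n ≥ 2, n³ · √(2n) · arctan( √(2n)/(n − 1) ) = 2 · ∑_{k=0}^∞ (1/(n⁴)^k) · ( n³/(8k+1) + n²/(8k+3) − n/(8k+5) − 1/(8k+7) ). -/
/-!
Since `1 / m = ∫₀¹ s ^ (m - 1) ds`, the `k`-th term of the series is
`∫₀¹ (s⁸ / N⁴) ^ k (N³ + N²s² - Ns⁴ - s⁶) ds`. The integrands are nonnegative, so sum and
integral may be exchanged, and the geometric series sums to `N⁴ (N + s²) / (N² + s⁴)`.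
With `u² = 2N`, an antiderivative of `u (N + s²) / (N² + s⁴)` is `arctan (u s / (N - s²))`.
-/

open Real Set intervalIntegral
open scoped Interval

theorem hasSum_intervalIntegral_of_nonneg {F : ℕ → ℝ → ℝ} {f : ℝ → ℝ} {a b : ℝ}
    (hF : ∀ k, IntervalIntegrable (F k) MeasureTheory.volume a b)
    (hf : IntervalIntegrable f MeasureTheory.volume a b)
    (hF_nonneg : ∀ k, ∀ t ∈ Ι a b, 0 ≤ F k t)
    (hFf : ∀ t ∈ Ι a b, HasSum (fun k => F k t) (f t)) :
    HasSum (fun k => ∫ t in a..b, F k t) (∫ t in a..b, f t) :=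
  hasSum_integral_of_dominated_convergence F (fun k => (hF k).def'.aestronglyMeasurable)
    (fun k => .of_forall fun t ht => (norm_of_nonneg (hF_nonneg k t ht)).le)
    (.of_forall fun t ht => (hFf t ht).summable)
    ((intervalIntegrable_congr fun t ht => (hFf t ht).tsum_eq).2 hf)
    (.of_forall hFf)

theorem integral_pow_mul_bbp (N : ℝ) (k : ℕ) :
    ∫ s in (0 : ℝ)..1, s ^ (8 * k) * (N ^ 3 + N ^ 2 * s ^ 2 - N * s ^ 4 - s ^ 6) =
      N ^ 3 / (8 * k + 1) + N ^ 2 / (8 * k + 3) - N / (8 * k + 5) - 1 / (8 * k + 7) := by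
  have expand : ∀ s : ℝ, s ^ (8 * k) * (N ^ 3 + N ^ 2 * s ^ 2 - N * s ^ 4 - s ^ 6) =
      N ^ 3 * s ^ (8 * k) + N ^ 2 * s ^ (8 * k + 2) - N * s ^ (8 * k + 4) - s ^ (8 * k + 6) :=
    fun s => by ring
  simp only [expand]
  rw [integral_sub, integral_sub, integral_add]
  · simp [integral_pow]
    ring
  all_goals exact Continuous.intervalIntegrable (by fun_prop) 0 1

theorem hasSum_bbp_geometric {N s : ℝ} (hs : s ^ 2 < N) :
    HasSum
      (fun k : ℕ => 1 / (N ^ 4) ^ k * (s ^ (8 * k) * (N ^ 3 + N ^ 2 * s ^ 2 - N * s ^ 4 - s ^ 6)))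
      (N ^ 4 * ((N + s ^ 2) / (N ^ 2 + s ^ 4))) := by
  have hN : 0 < N := (sq_nonneg s).trans_lt hs
  have h8 : s ^ 8 < N ^ 4 :=
    calc s ^ 8 = (s ^ 2) ^ 4 := by ring
      _ < N ^ 4 := by gcongr
  have hr : s ^ 8 / N ^ 4 < 1 := (div_lt_one (by positivity)).2 h8
  have hterm : ∀ k : ℕ,
      1 / (N ^ 4) ^ k * (s ^ (8 * k) * (N ^ 3 + N ^ 2 * s ^ 2 - N * s ^ 4 - s ^ 6)) =
        (s ^ 8 / N ^ 4) ^ k * (N ^ 3 + N ^ 2 * s ^ 2 - N * s ^ 4 - s ^ 6) := fun k => by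
    rw [div_pow, pow_mul]; ring
  -- `N³ + N²s² - Ns⁴ - s⁶ = (N + s²)(N² - s⁴)` and `N⁴ - s⁸ = (N² - s⁴)(N² + s⁴)`
  have hsum : N ^ 4 * ((N + s ^ 2) / (N ^ 2 + s ^ 4)) =
      (1 - s ^ 8 / N ^ 4)⁻¹ * (N ^ 3 + N ^ 2 * s ^ 2 - N * s ^ 4 - s ^ 6) := by
    have : N ^ 4 - s ^ 8 ≠ 0 := (sub_pos.2 h8).ne'
    field_simp
    ring
  simpa only [hterm, hsum] using
    (hasSum_geometric_of_lt_one (by positivity) hr).mul_right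
      (N ^ 3 + N ^ 2 * s ^ 2 - N * s ^ 4 - s ^ 6)

theorem hasDerivAt_arctan_bbp {N u s : ℝ} (hu : u ^ 2 = 2 * N) (hs : s ^ 2 ≠ N) :
    HasDerivAt (fun s => arctan (u * s / (N - s ^ 2))) (u * (N + s ^ 2) / (N ^ 2 + s ^ 4)) s := by
  have hden : N - s ^ 2 ≠ 0 := sub_ne_zero.2 hs.symm
  have h : HasDerivAt (fun s => u * s / (N - s ^ 2))
      ((u * 1 * (N - s ^ 2) - u * s * (0 - 2 * s ^ 1)) / (N - s ^ 2) ^ 2) s :=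
    (((hasDerivAt_id s).const_mul u).div ((hasDerivAt_pow 2 s).const_sub N) hden).congr_deriv
      (by norm_num)
  convert h.arctan using 1
  have hsq : (N - s ^ 2) ^ 2 + (u * s) ^ 2 = N ^ 2 + s ^ 4 := by linear_combination s ^ 2 * hu
  have : N ^ 2 + s ^ 4 ≠ 0 := by rw [← hsq]; positivity
  field_simp
  linear_combination u * s ^ 2 * (N + s ^ 2) * hu

theorem integral_bbp_rational {N u : ℝ} (hN : 1 < N) (hu : u ^ 2 = 2 * N) (hu0 : u ≠ 0) :
    ∫ s in (0 : ℝ)..1, (N + s ^ 2) / (N ^ 2 + s ^ 4) = arctan (u / (N - 1)) / u := by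
  have hpos : ∀ s : ℝ, N ^ 2 + s ^ 4 ≠ 0 := fun s => by positivity
  rw [integral_eq_sub_of_hasDerivAt (f := fun s => arctan (u * s / (N - s ^ 2)) / u)]
  · simp
  · intro s hs
    rw [uIcc_of_le zero_le_one] at hs
    have hs2 : s ^ 2 ≠ N := (pow_le_one₀ hs.1 hs.2).trans_lt hN |>.ne
    have h := (hasDerivAt_arctan_bbp hu hs2).div_const u
    rwa [mul_div_assoc, mul_div_cancel_left₀ _ hu0] at h
  · exact Continuous.intervalIntegrable (by fun_prop (disch := exact hpos)) 0 1

theorem hasSum_bbp {N u : ℝ} (hN : 1 < N) (hu : u ^ 2 = 2 * N) (hu0 : u ≠ 0) :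
    HasSum (fun k : ℕ => (1 / (N ^ 4) ^ k) *
        (N ^ 3 / (8 * (k : ℝ) + 1) + N ^ 2 / (8 * (k : ℝ) + 3)
          - N / (8 * (k : ℝ) + 5) - 1 / (8 * (k : ℝ) + 7)))
      (N ^ 4 * (arctan (u / (N - 1)) / u)) := by
  have hlt : ∀ s ∈ Ι (0 : ℝ) 1, s ^ 2 < N := by
    intro s hs
    rw [uIoc_of_le zero_le_one] at hs
    exact (pow_le_one₀ hs.1.le hs.2).trans_lt hN
  have hpos : ∀ s : ℝ, N ^ 2 + s ^ 4 ≠ 0 := fun s => by positivity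
  have hsum := hasSum_intervalIntegral_of_nonneg (a := 0) (b := 1)
    (F := fun k s => 1 / (N ^ 4) ^ k * (s ^ (8 * k) * (N ^ 3 + N ^ 2 * s ^ 2 - N * s ^ 4 - s ^ 6)))
    (f := fun s => N ^ 4 * ((N + s ^ 2) / (N ^ 2 + s ^ 4)))
    (fun k => Continuous.intervalIntegrable (by fun_prop) 0 1)
    (Continuous.intervalIntegrable (by fun_prop (disch := exact hpos)) 0 1)
    (fun k s hs => by
      have hs0 : 0 < s := by rw [uIoc_of_le zero_le_one] at hs; exact hs.1
      have hNs := sub_pos.2 (hlt s hs)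
      rw [show N ^ 3 + N ^ 2 * s ^ 2 - N * s ^ 4 - s ^ 6 = (N + s ^ 2) ^ 2 * (N - s ^ 2) by ring]
      positivity)
    (fun s hs => hasSum_bbp_geometric (hlt s hs))
  simpa only [integral_const_mul, integral_pow_mul_bbp, integral_bbp_rational hN hu hu0]
    using hsum

theorem bbp_arctan_sqrt {N : ℝ} (hN : 1 < N) :
    N ^ 3 * √(2 * N) * arctan (√(2 * N) / (N - 1)) =
      2 * ∑' k : ℕ, (1 / (N ^ 4) ^ k) *
        (N ^ 3 / (8 * (k : ℝ) + 1) + N ^ 2 / (8 * (k : ℝ) + 3)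
          - N / (8 * (k : ℝ) + 5) - 1 / (8 * (k : ℝ) + 7)) := by
  set u := √(2 * N)
  have hu : u ^ 2 = 2 * N := sq_sqrt (by linarith)
  have hu0 : 0 < u := sqrt_pos.2 (by linarith)
  have hcoeff : N ^ 3 * u = 2 * N ^ 4 / u := by
    rw [eq_div_iff hu0.ne']
    linear_combination N ^ 3 * hu
  rw [(hasSum_bbp hN hu hu0.ne').tsum_eq, hcoeff]
  ring

theorem stmt_9 (n : ℕ) (hn : 2 ≤ n) :
    (n : ℝ) ^ 3 * Real.sqrt (2 * n) * Real.arctan (Real.sqrt (2 * n) / ((n : ℝ) - 1)) =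
      2 * ∑' k : ℕ, (1 / ((n : ℝ) ^ 4) ^ k) *
        ((n : ℝ) ^ 3 / (8 * (k : ℝ) + 1) + (n : ℝ) ^ 2 / (8 * (k : ℝ) + 3)
          - (n : ℝ) / (8 * (k : ℝ) + 5) - 1 / (8 * (k : ℝ) + 7)) :=
  bbp_arctan_sqrt (by exact_mod_cast hn)
end

section
/- For every positive integer n, ln( (n² + n + 1)/n² ) = (1/n³) · ∑_{k=0}^∞ (1/(n³)^k) · ( n²/(3k+1) + n/(3k+2) − 2/(3k+3) ). -/
/-!
Since `1 + x + x ^ 2 = (1 - x ^ 3) / (1 - x)`, we have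
`log (1 + x + x ^ 2) = -log (1 - x) - (-log (1 - x ^ 3))`. Grouping the Mercator series of
`-log (1 - x)` in blocks of three and subtracting the series of `-log (1 - x ^ 3)` gives an
expansion of `log (1 + x + x ^ 2)` for `|x| < 1`, which at `x = 1 / n` is the claimed formula.
At the boundary point `x = 1` (that is, `n = 1`) the terms are nonnegative and the partial sums
are `H (3 N) - H N`, which tend to `log 3`.
-/

open Real Filter Topology Finset

theorem HasSum.sum_fin_mul_add {α : Type*} [AddCommMonoid α] [TopologicalSpace α]
    [ContinuousAdd α] [RegularSpace α] {f : ℕ → α} {a : α} (m : ℕ) [NeZero m]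
    (h : HasSum f a) : HasSum (fun k ↦ ∑ i : Fin m, f (k * m + i)) a :=
  ((Nat.divModEquiv m).symm.hasSum_iff.mpr h).prod_fiberwise fun _ ↦ hasSum_fintype _

lemma tendsto_harmonic_mul_sub_harmonic {c : ℕ} (hc : 0 < c) :
    Tendsto (fun N : ℕ ↦ (harmonic (c * N) : ℝ) - harmonic N) atTop (𝓝 (log c)) := by
  have hcN : Tendsto (c * ·) atTop atTop := tendsto_id.const_mul_atTop' hc
  have h := ((tendsto_harmonic_sub_log.comp hcN).sub tendsto_harmonic_sub_log).add_const (log c)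
  rw [sub_self, zero_add] at h
  refine h.congr' ?_
  filter_upwards [eventually_gt_atTop 0] with N hN
  simp only [Function.comp_apply, Nat.cast_mul]
  rw [log_mul (by positivity) (by positivity)]
  ring

noncomputable def logTrinomialTerm (x : ℝ) (k : ℕ) : ℝ :=
  x ^ (3 * k + 1) / (3 * k + 1) + x ^ (3 * k + 2) / (3 * k + 2) - 2 * x ^ (3 * k + 3) / (3 * k + 3)

lemma sum_range_logTrinomialTerm_one (N : ℕ) :
    ∑ k ∈ range N, logTrinomialTerm 1 k = harmonic (3 * N) - harmonic N := by
  induction N with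
  | zero => simp
  | succ N ih =>
    rw [sum_range_succ, ih, show 3 * (N + 1) = 3 * N + 1 + 1 + 1 by ring]
    simp only [harmonic_succ, logTrinomialTerm, one_pow]
    push_cast
    field_simp
    ring

lemma logTrinomialTerm_one_nonneg (k : ℕ) : 0 ≤ logTrinomialTerm 1 k := by
  have h1 : 1 / (3 * k + 3 : ℝ) ≤ 1 / (3 * k + 1) := by gcongr; norm_num
  have h2 : 1 / (3 * k + 3 : ℝ) ≤ 1 / (3 * k + 2) := by gcongr; norm_num
  have h3 : 2 / (3 * k + 3 : ℝ) = 1 / (3 * k + 3) + 1 / (3 * k + 3) := by ring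
  simp only [logTrinomialTerm, one_pow, mul_one]
  linarith

lemma hasSum_logTrinomialTerm_one : HasSum (logTrinomialTerm 1) (log 3) := by
  rw [hasSum_iff_tendsto_nat_of_nonneg logTrinomialTerm_one_nonneg]
  simp_rw [sum_range_logTrinomialTerm_one]
  exact_mod_cast tendsto_harmonic_mul_sub_harmonic three_pos

lemma hasSum_logTrinomialTerm {x : ℝ} (hx : |x| < 1) :
    HasSum (logTrinomialTerm x) (log (1 + x + x ^ 2)) := by
  have hx3 : |x ^ 3| < 1 := by rw [abs_pow]; exact pow_lt_one₀ (abs_nonneg x) hx three_ne_zero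
  have hpos : 0 < 1 - x := by linarith [le_abs_self x]
  have hblocks := (hasSum_pow_div_log_of_abs_lt_one hx).sum_fin_mul_add 3
  have hcubes := (hasSum_pow_div_log_of_abs_lt_one hx3).mul_left 3
  have hcube_pos : 0 < 1 - x ^ 3 := by linarith [le_abs_self (x ^ 3)]
  have hlog : log (1 + x + x ^ 2) = -log (1 - x) - 3 * -log (1 - x ^ 3) / 3 := by
    rw [mul_div_cancel_left₀ _ three_ne_zero, neg_sub_neg, ← log_div hcube_pos.ne' hpos.ne']
    congr 1
    field_simp
    ring
  rw [hlog]
  refine (hblocks.sub (hcubes.div_const 3)).congr_fun fun k ↦ ?_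
  simp only [logTrinomialTerm, Fin.sum_univ_three, Fin.val_zero, Fin.val_one, Fin.val_two,
    ← pow_mul]
  push_cast
  field_simp
  ring

lemma hasSum_logTrinomialTerm_of_mem_Ioc {x : ℝ} (hx : x ∈ Set.Ioc (-1) 1) :
    HasSum (logTrinomialTerm x) (log (1 + x + x ^ 2)) := by
  rcases hx.2.eq_or_lt with rfl | hx₁
  · norm_num [hasSum_logTrinomialTerm_one]
  · exact hasSum_logTrinomialTerm (abs_lt.mpr ⟨hx.1, hx₁⟩)

theorem stmt_16 (n : ℕ) (hn : 0 < n) :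
    Real.log (((n : ℝ) ^ 2 + (n : ℝ) + 1) / (n : ℝ) ^ 2) =
      (1 / (n : ℝ) ^ 3) * ∑' k : ℕ, (1 / ((n : ℝ) ^ 3) ^ k) *
        ((n : ℝ) ^ 2 / (3 * (k : ℝ) + 1) + (n : ℝ) / (3 * (k : ℝ) + 2)
          - 2 / (3 * (k : ℝ) + 3)) := by
  have hn₁ : (1 : ℝ) ≤ n := by exact_mod_cast hn
  have hx : (n : ℝ)⁻¹ ∈ Set.Ioc (-1) 1 :=
    ⟨by linarith [inv_pos.mpr (zero_lt_one.trans_le hn₁)], inv_le_one_of_one_le₀ hn₁⟩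
  have hfrac : ((n : ℝ) ^ 2 + n + 1) / (n : ℝ) ^ 2 = 1 + (n : ℝ)⁻¹ + (n : ℝ)⁻¹ ^ 2 := by
    field_simp
  rw [hfrac, ← (hasSum_logTrinomialTerm_of_mem_Ioc hx).tsum_eq, ← tsum_mul_left]
  refine tsum_congr fun k ↦ ?_
  simp only [logTrinomialTerm, inv_pow]
  field_simp
  ring
end

section
/- For every positive integer n, n · (√n/√2) · ln( (n + √2·√n + 1)/(n − √2·√n + 1) ) = 2 · ∑_{k=0}^∞ (1/(−n²)^k) · ( n/(4k+1) − 1/(4k+3) ). -/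
open Real Set MeasureTheory
open scoped Interval

/-!
For `|s| ≤ 1` we have `(1 - s²)/(1 + s⁴) = ∑ₖ (1 - s²)(-s⁴)ᵏ`, and the absolute values of the
terms sum to `1/(1 + s²)` for `|s| < 1`, so dominated convergence lets us integrate termwise over
`[0, t]` for every `|t| ≤ 1`, the endpoint `t = 1` (that is, `n = 1`) included. The integrand is the
derivative of `log ((t² + √2 t + 1)/(t² - √2 t + 1)) / (2√2)`, while the `k`-th term integrates to
`(-t⁴)ᵏ (t/(4k+1) - t³/(4k+3))`. Taking `t = 1/√n` and multiplying by `n√n` gives the series in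
base `-n²`.
-/

lemma sq_sub_sqrt_two_mul_add_one_pos (t : ℝ) : 0 < t ^ 2 - √2 * t + 1 := by
  nlinarith [sq_nonneg (2 * t - √2), sq_sqrt (zero_le_two : (0 : ℝ) ≤ 2)]

lemma sq_add_sqrt_two_mul_add_one_pos (t : ℝ) : 0 < t ^ 2 + √2 * t + 1 := by
  nlinarith [sq_nonneg (2 * t + √2), sq_sqrt (zero_le_two : (0 : ℝ) ≤ 2)]

lemma hasDerivAt_log_sub_log_div (s : ℝ) :
    HasDerivAt (fun t ↦ (log (t ^ 2 + √2 * t + 1) - log (t ^ 2 - √2 * t + 1)) / (2 * √2))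
      ((1 - s ^ 2) / (1 + s ^ 4)) s := by
  have hp := (sq_add_sqrt_two_mul_add_one_pos s).ne'
  have hm := (sq_sub_sqrt_two_mul_add_one_pos s).ne'
  have hlogp := (((hasDerivAt_pow 2 s).add ((hasDerivAt_id s).const_mul √2)).add_const 1).log hp
  have hlogm := (((hasDerivAt_pow 2 s).sub ((hasDerivAt_id s).const_mul √2)).add_const 1).log hm
  refine ((hlogp.sub hlogm).div_const (2 * √2)).congr_deriv ?_
  simp only [Pi.add_apply, Pi.sub_apply, id, Nat.cast_ofNat, mul_one]
  rw [div_sub_div _ _ hp hm, div_div, div_eq_div_iff (by positivity) (by positivity)]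
  linear_combination (2 * √2 * (1 - s ^ 2) * s ^ 2) * sq_sqrt (zero_le_two : (0 : ℝ) ≤ 2)

lemma integral_one_sub_sq_div_one_add_pow_four (t : ℝ) :
    ∫ s in (0 : ℝ)..t, (1 - s ^ 2) / (1 + s ^ 4) =
      log ((t ^ 2 + √2 * t + 1) / (t ^ 2 - √2 * t + 1)) / (2 * √2) := by
  rw [intervalIntegral.integral_eq_sub_of_hasDerivAt (fun s _ ↦ hasDerivAt_log_sub_log_div s)
    (by apply Continuous.intervalIntegrable; fun_prop (disch := intro; positivity)),
    log_div (sq_add_sqrt_two_mul_add_one_pos t).ne' (sq_sub_sqrt_two_mul_add_one_pos t).ne']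
  simp

lemma integral_one_sub_sq_mul_neg_pow_four_pow (t : ℝ) (k : ℕ) :
    ∫ s in (0 : ℝ)..t, (1 - s ^ 2) * (-s ^ 4) ^ k =
      (-t ^ 4) ^ k * (t / (4 * k + 1) - t ^ 3 / (4 * k + 3)) := by
  have h (s : ℝ) : (1 - s ^ 2) * (-s ^ 4) ^ k = (-1) ^ k * (s ^ (4 * k) - s ^ (4 * k + 2)) := by
    rw [neg_pow, pow_mul]; ring
  simp_rw [h]
  rw [intervalIntegral.integral_const_mul, intervalIntegral.integral_sub
    (intervalIntegral.intervalIntegrable_pow _) (intervalIntegral.intervalIntegrable_pow _),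
    integral_pow, integral_pow, neg_pow (t ^ 4), ← pow_mul]
  push_cast
  ring

lemma hasSum_one_sub_sq_mul_neg_pow_four_pow {s : ℝ} (hs : |s| ≤ 1) :
    HasSum (fun k : ℕ ↦ (1 - s ^ 2) * (-s ^ 4) ^ k) ((1 - s ^ 2) / (1 + s ^ 4)) := by
  rcases hs.lt_or_eq with hs | hs
  · have h4 : |-s ^ 4| < 1 := by
      rw [abs_neg, abs_pow]; exact pow_lt_one₀ (abs_nonneg s) hs (by norm_num)
    simpa [div_eq_mul_inv] using (hasSum_geometric_of_abs_lt_one h4).mul_left (1 - s ^ 2)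
  · have : s ^ 2 = 1 := by rw [← sq_abs, hs, one_pow]
    simp [this]

lemma hasSum_one_sub_sq_mul_pow_four_pow {s : ℝ} (hs : |s| < 1) :
    HasSum (fun k : ℕ ↦ (1 - s ^ 2) * (s ^ 4) ^ k) (1 / (1 + s ^ 2)) := by
  have h4 : s ^ 4 < 1 := by
    rw [← Even.pow_abs ⟨2, rfl⟩]; exact pow_lt_one₀ (abs_nonneg s) hs (by norm_num)
  have h := (hasSum_geometric_of_lt_one (by positivity) h4).mul_left (1 - s ^ 2)
  rwa [show (1 - s ^ 2) * (1 - s ^ 4)⁻¹ = 1 / (1 + s ^ 2) by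
    have : 1 + s ^ 2 ≠ 0 := by positivity
    have : 1 - s ^ 4 ≠ 0 := by linarith
    field_simp; ring] at h

theorem hasSum_log_quadratic_ratio {t : ℝ} (ht : |t| ≤ 1) :
    HasSum (fun k : ℕ ↦ (-t ^ 4) ^ k * (t / (4 * k + 1) - t ^ 3 / (4 * k + 3)))
      (log ((t ^ 2 + √2 * t + 1) / (t ^ 2 - √2 * t + 1)) / (2 * √2)) := by
  have hIoc {s : ℝ} (hs : s ∈ Ι 0 t) : |s| ≤ 1 :=
    (show |s| ≤ |t| by simpa using abs_sub_left_of_mem_uIcc (uIoc_subset_uIcc hs)).trans ht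
  have hIoo {s : ℝ} (hs : s ∈ uIoo 0 t) : |s| < 1 :=
    abs_lt.2 <| Ioo_subset_Ioo (le_inf (by norm_num) (abs_le.1 ht).1)
      (sup_le zero_le_one (abs_le.1 ht).2) hs
  have hnorm {s : ℝ} (hs : |s| ≤ 1) (k : ℕ) :
      ‖(1 - s ^ 2) * (-s ^ 4) ^ k‖ = (1 - s ^ 2) * (s ^ 4) ^ k := by
    rw [norm_mul, norm_pow, norm_neg, Real.norm_of_nonneg (by positivity : 0 ≤ s ^ 4),
      Real.norm_of_nonneg (sub_nonneg.2 ((sq_le_one_iff_abs_le_one s).2 hs))]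
  simp_rw [← integral_one_sub_sq_div_one_add_pow_four, ← integral_one_sub_sq_mul_neg_pow_four_pow]
  refine intervalIntegral.hasSum_integral_of_dominated_convergence
    (fun k s ↦ (1 - s ^ 2) * (s ^ 4) ^ k) (fun k ↦ by fun_prop)
    (fun k ↦ ae_of_all _ fun s hs ↦ (hnorm (hIoc hs) k).le)
    (ae_of_all _ fun s hs ↦ ?_) ?_
    (ae_of_all _ fun s hs ↦ hasSum_one_sub_sq_mul_neg_pow_four_pow (hIoc hs))
  · simp_rw [← hnorm (hIoc hs)]
    exact (hasSum_one_sub_sq_mul_neg_pow_four_pow (hIoc hs)).summable.norm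
  · have hcont : Continuous fun s : ℝ ↦ 1 / (1 + s ^ 2) := by
      fun_prop (disch := intro; positivity)
    exact (hcont.intervalIntegrable 0 t).congr_uIoo
      fun s hs ↦ (hasSum_one_sub_sq_mul_pow_four_pow (hIoo hs)).tsum_eq.symm

theorem hasSum_bbp_log_quadratic_ratio {x : ℝ} (hx : 1 ≤ x) :
    HasSum (fun k : ℕ ↦ 1 / (-x ^ 2) ^ k * (x / (4 * k + 1) - 1 / (4 * k + 3)))
      (x * (√x / √2) * log ((x + √2 * √x + 1) / (x - √2 * √x + 1)) / 2) := by
  obtain ⟨c, hc, rfl⟩ : ∃ c : ℝ, 1 ≤ c ∧ x = c ^ 2 :=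
    ⟨√x, by simpa using sqrt_le_sqrt hx, (sq_sqrt (by linarith)).symm⟩
  have hc0 : c ≠ 0 := by positivity
  have ht : |c⁻¹| ≤ 1 := by rw [abs_inv, abs_of_pos (by positivity)]; exact inv_le_one_of_one_le₀ hc
  have h := (hasSum_log_quadratic_ratio ht).mul_left (c ^ 3)
  have hratio : (c⁻¹ ^ 2 + √2 * c⁻¹ + 1) / (c⁻¹ ^ 2 - √2 * c⁻¹ + 1) =
      (c ^ 2 + √2 * c + 1) / (c ^ 2 - √2 * c + 1) := by
    have := (sq_sub_sqrt_two_mul_add_one_pos c).ne'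
    field_simp
    ring
  have hscale (L : ℝ) : c ^ 2 * (c / √2) * L / 2 = c ^ 3 * (L / (2 * √2)) := by field_simp
  rw [sqrt_sq (by positivity), ← hratio, hscale]
  refine h.congr_fun fun k ↦ ?_
  have : (-(c ^ 2) ^ 2) ^ k ≠ 0 := pow_ne_zero _ (neg_ne_zero.2 (by positivity))
  rw [show -c⁻¹ ^ 4 = (-(c ^ 2) ^ 2)⁻¹ by rw [inv_neg, ← pow_mul, inv_pow], inv_pow]
  field_simp

theorem stmt_18 (n : ℕ) (hn : 0 < n) :
    (n : ℝ) * (Real.sqrt n / Real.sqrt 2) *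
        Real.log (((n : ℝ) + Real.sqrt 2 * Real.sqrt n + 1) /
          ((n : ℝ) - Real.sqrt 2 * Real.sqrt n + 1)) =
      2 * ∑' k : ℕ, (1 / (-(n : ℝ) ^ 2) ^ k) *
        ((n : ℝ) / (4 * (k : ℝ) + 1) - 1 / (4 * (k : ℝ) + 3)) := by
  rw [(hasSum_bbp_log_quadratic_ratio (Nat.one_le_cast.2 hn)).tsum_eq]
  ring
end

section
/- For every positive integer n, ln( (3n² + 3n + 1)/(3n²) ) = (1/(27n⁶)) · ∑_{k=0}^∞ (1/(−27n⁶)^k) · ( 27n⁵/(6k+1) − 9n⁴/(6k+2) + 3n²/(6k+4) − 3n/(6k+5) + 2/(6k+6) ). -/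
/-!
Put `z = ω / n` with `ω = e^{5πi/6} / √3`, so that `z⁶ = -1 / (27 n⁶)` is real and
`‖1 - z‖² = (3n² + 3n + 1) / (3n²)`. The real part of `-log (1 - z) = ∑ z^k / k` is
`-log ‖1 - z‖ = ∑ Re (z^k) / k`; grouping its terms in blocks of six gives a series in powers of
`z⁶` whose six coefficients come from `Re ω^j = -1/2, 1/6, 0, -1/18, 1/18, -1/27`.
-/

open Finset

theorem HasSum.sum_range_blocks {α : Type*} [AddCommMonoid α] [TopologicalSpace α]
    [ContinuousAdd α] [RegularSpace α] {f : ℕ → α} {a : α} (hf : HasSum f a)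
    (m : ℕ) [NeZero m] : HasSum (fun q ↦ ∑ j ∈ range m, f (q * m + j)) a := by
  refine ((Nat.divModEquiv m).symm.hasSum_iff.mpr hf).prod_fiberwise fun q ↦ ?_
  simpa [Fin.sum_univ_eq_sum_range (fun j ↦ f (q * m + j))] using
    hasSum_fintype (fun j : Fin m ↦ f (q * m + j))

namespace Complex

theorem hasSum_re_taylorSeries_neg_log {z : ℂ} (hz : ‖z‖ < 1) :
    HasSum (fun n : ℕ ↦ (z ^ (n + 1)).re / (n + 1)) (-Real.log ‖1 - z‖) := by
  have := hasSum_re (hasSum_taylorSeries_neg_log' hz)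
  rw [neg_re, log_re] at this
  convert this using 2 with n
  exact_mod_cast (div_natCast_re _ (n + 1)).symm

theorem hasSum_re_taylorSeries_neg_log_blocks {z : ℂ} (hz : ‖z‖ < 1) (m : ℕ) [NeZero m]
    {w : ℝ} (hw : z ^ m = w) :
    HasSum (fun q : ℕ ↦ w ^ q * ∑ j ∈ range m, (z ^ (j + 1)).re / (q * m + j + 1))
      (-Real.log ‖1 - z‖) := by
  convert (hasSum_re_taylorSeries_neg_log hz).sum_range_blocks m using 2 with q
  rw [mul_sum]
  refine sum_congr rfl fun j _ ↦ ?_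
  rw [show q * m + j + 1 = m * q + (j + 1) by ring, pow_add z (m * q), pow_mul, hw, ← ofReal_pow,
    re_ofReal_mul]
  push_cast
  ring

end Complex

namespace BBP

open Complex

noncomputable def ω : ℂ := ⟨-1 / 2, √3 / 6⟩

theorem sqrt_three_sq : √3 ^ 2 = 3 := Real.sq_sqrt (by norm_num)

theorem ω_pow_three : ω ^ 3 = ⟨0, √3 / 9⟩ := by
  apply Complex.ext <;> simp only [ω, pow_succ, pow_zero, one_mul, mul_re, mul_im]
  · linear_combination (1 / 24 : ℝ) * sqrt_three_sq
  · linear_combination (-√3 / 216) * sqrt_three_sq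

theorem ω_pow_six : ω ^ 6 = ((-1 / 27 : ℝ) : ℂ) := by
  rw [show 6 = 3 * 2 by rfl, pow_mul, ω_pow_three]
  apply Complex.ext <;> simp only [sq, mul_re, mul_im, ofReal_re, ofReal_im]
  · linear_combination (-1 / 81 : ℝ) * sqrt_three_sq
  · ring

theorem re_ω_pow :
    ω.re = -1 / 2 ∧ (ω ^ 2).re = 1 / 6 ∧ (ω ^ 3).re = 0 ∧ (ω ^ 4).re = -1 / 18 ∧
      (ω ^ 5).re = 1 / 18 ∧ (ω ^ 6).re = -1 / 27 := by
  refine ⟨rfl, ?_, by rw [ω_pow_three], ?_, ?_, by rw [ω_pow_six, ofReal_re]⟩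
  · simp only [ω, sq, mul_re]
    linear_combination (-1 / 36 : ℝ) * sqrt_three_sq
  · rw [pow_succ, ω_pow_three]
    simp only [ω, mul_re]
    linear_combination (-1 / 54 : ℝ) * sqrt_three_sq
  · rw [show 5 = 3 + 2 by rfl, pow_add, ω_pow_three]
    simp only [ω, sq, mul_re, mul_im]
    linear_combination (1 / 54 : ℝ) * sqrt_three_sq

theorem normSq_ω : normSq ω = 1 / 3 := by
  simp only [ω, normSq_apply]
  linear_combination (1 / 36 : ℝ) * sqrt_three_sq

theorem normSq_one_sub_ofReal_mul_ω (x : ℝ) : normSq (1 - x * ω) = 1 + x + x ^ 2 / 3 := by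
  simp only [ω, normSq_apply, sub_re, sub_im, one_re, one_im, mul_re, mul_im, ofReal_re,
    ofReal_im]
  linear_combination (x ^ 2 / 36 : ℝ) * sqrt_three_sq

theorem norm_ofReal_mul_ω_lt_one {x : ℝ} (hx : |x| ≤ 1) : ‖(x : ℂ) * ω‖ < 1 := by
  rw [← sq_lt_one_iff₀ (norm_nonneg _), Complex.sq_norm, normSq_mul, normSq_ofReal, normSq_ω]
  nlinarith [abs_mul_abs_self x, abs_nonneg x]

theorem block_sum_re_pow_eq {N : ℝ} (hN : N ≠ 0) (k : ℕ) :
    -(54 * N ^ 6) * ∑ j ∈ range 6, (((N⁻¹ : ℝ) * ω : ℂ) ^ (j + 1)).re / (k * (6 : ℕ) + j + 1) =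
      27 * N ^ 5 / (6 * (k : ℝ) + 1) - 9 * N ^ 4 / (6 * (k : ℝ) + 2)
        + 3 * N ^ 2 / (6 * (k : ℝ) + 4) - 3 * N / (6 * (k : ℝ) + 5) + 2 / (6 * (k : ℝ) + 6) := by
  obtain ⟨e1, e2, e3, e4, e5, e6⟩ := re_ω_pow
  simp only [sum_range_succ, sum_range_zero, zero_add, Nat.reduceAdd, mul_pow, ← ofReal_pow,
    re_ofReal_mul, pow_one, e1, e2, e3, e4, e5, e6]
  field_simp
  ring

end BBP

open BBP Complex

theorem stmt_19 (n : ℕ) (hn : 0 < n) :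
    Real.log ((3 * (n : ℝ) ^ 2 + 3 * (n : ℝ) + 1) / (3 * (n : ℝ) ^ 2)) =
      (1 / (27 * (n : ℝ) ^ 6)) * ∑' k : ℕ, (1 / (-(27 * (n : ℝ) ^ 6)) ^ k) *
        (27 * (n : ℝ) ^ 5 / (6 * (k : ℝ) + 1) - 9 * (n : ℝ) ^ 4 / (6 * (k : ℝ) + 2)
          + 3 * (n : ℝ) ^ 2 / (6 * (k : ℝ) + 4) - 3 * (n : ℝ) / (6 * (k : ℝ) + 5)
          + 2 / (6 * (k : ℝ) + 6)) := by
  have hN : (1 : ℝ) ≤ n := by exact_mod_cast hn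
  have hN0 : (n : ℝ) ≠ 0 := by positivity
  have hz : ‖((n⁻¹ : ℝ) : ℂ) * ω‖ < 1 :=
    norm_ofReal_mul_ω_lt_one (by rw [abs_inv, Nat.abs_cast]; exact inv_le_one_of_one_le₀ hN)
  have hz6 : (((n⁻¹ : ℝ) : ℂ) * ω) ^ 6 = ((1 / (-(27 * (n : ℝ) ^ 6)) : ℝ) : ℂ) := by
    rw [mul_pow, ω_pow_six, ← ofReal_pow, ← ofReal_mul]
    congr 1
    field_simp
  have hsum := (hasSum_re_taylorSeries_neg_log_blocks hz 6 hz6).mul_left (-(54 * (n : ℝ) ^ 6))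
  have hnorm : ‖1 - ((n⁻¹ : ℝ) : ℂ) * ω‖ ^ 2 = (3 * (n : ℝ) ^ 2 + 3 * n + 1) / (3 * n ^ 2) := by
    rw [Complex.sq_norm, normSq_one_sub_ofReal_mul_ω]
    field_simp
  rw [tsum_congr fun k ↦ by rw [← block_sum_re_pow_eq hN0 k, ← one_div_pow, mul_left_comm],
    hsum.tsum_eq, ← hnorm, Real.log_pow]
  field_simp
  ring
end
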